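/- For every 0 ≤ d ≤ n−3, the map f : M₁↓(d) → M₁↑(d+1), f(σ) = (A(σ) − α(σ), B(σ) + α(σ), C(σ), D(σ)), and the map g : M₂↓(d) → M₂↑(d+1), g(σ) = (A(σ), B(σ) + β(σ), C(σ) − β(σ), D(σ)), are well-defined bijections, whose inverses are given by f⁻¹(σ) = (A(σ) + α(σ), B(σ) − α(σ), C(σ), D(σ)) and g⁻¹(σ) = (A(σ), B(σ) − β(σ), C(σ) + β(σ), D(σ)) respectively. Here M↕(d) denotes the set of cubes of dimension d in the corresponding set M↕. -/
import Mathlib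


/-- A (potential) cube of the cubical complex `Ω_n`: an ordered 4-tuple of finite
subsets of `ℕ`. -/
structure Cube where
  A : Finset ℕ
  B : Finset ℕ
  C : Finset ℕ
  D : Finset ℕ
deriving DecidableEq

/-- `σ` is a cube of `Ω_n`: the four parts are pairwise disjoint, their union is
`[n] = {1,…,n}`, and `A`, `C` are nonempty. -/
def IsCube (n : ℕ) (σ : Cube) : Prop :=
  Disjoint σ.A σ.B ∧ Disjoint σ.A σ.C ∧ Disjoint σ.A σ.D ∧
  Disjoint σ.B σ.C ∧ Disjoint σ.B σ.D ∧ Disjoint σ.C σ.D ∧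
  σ.A ∪ σ.B ∪ σ.C ∪ σ.D = Finset.Icc 1 n ∧
  σ.A.Nonempty ∧ σ.C.Nonempty

/-- The dimension of a cube, `|B| + |D|`. -/
def Cube.dim (σ : Cube) : ℕ := σ.B.card + σ.D.card

/-- The pivot `α(σ) = min (A ∪ B)`. -/
noncomputable def Cube.alpha (σ : Cube) : ℕ := sInf (↑(σ.A ∪ σ.B) : Set ℕ)

/-- The pivot `β(σ) = max (B ∪ C)`. -/
noncomputable def Cube.beta (σ : Cube) : ℕ := sSup (↑(σ.B ∪ σ.C) : Set ℕ)

def M1up (σ : Cube) : Prop := σ.alpha ∈ σ.B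
def M1down (σ : Cube) : Prop := σ.alpha ∈ σ.A ∧ 2 ≤ σ.A.card
def M2up (σ : Cube) : Prop := σ.A = {σ.alpha} ∧ σ.beta ∈ σ.B
def M2down (σ : Cube) : Prop :=
  σ.A = {σ.alpha} ∧ σ.beta ∈ σ.C ∧ 2 ≤ σ.C.card ∧ σ.alpha < σ.beta
def Mdown (σ : Cube) : Prop := M1down σ ∨ M2down σ
def Mup (σ : Cube) : Prop := M1up σ ∨ M2up σ
def Critical (σ : Cube) : Prop := ¬ Mdown σ ∧ ¬ Mup σ

/-- The covering relation: `τ` is obtained from `σ` by moving exactly one element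
of `B(σ) ∪ D(σ)` into `A(σ)` or into `C(σ)`. -/
def Covers (σ τ : Cube) : Prop :=
  (∃ x ∈ σ.B, τ = ⟨insert x σ.A, σ.B.erase x, σ.C, σ.D⟩) ∨
  (∃ x ∈ σ.B, τ = ⟨σ.A, σ.B.erase x, insert x σ.C, σ.D⟩) ∨
  (∃ x ∈ σ.D, τ = ⟨insert x σ.A, σ.B, σ.C, σ.D.erase x⟩) ∨
  (∃ x ∈ σ.D, τ = ⟨σ.A, σ.B, insert x σ.C, σ.D.erase x⟩)

open Classical in
/-- The matching `μ₊ : M↓ → M↑`. -/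
noncomputable def muPlus (σ : Cube) : Cube :=
  if M1down σ then ⟨σ.A.erase σ.alpha, insert σ.alpha σ.B, σ.C, σ.D⟩
  else ⟨σ.A, insert σ.beta σ.B, σ.C.erase σ.beta, σ.D⟩

/-- The map `f : M₁↓(d) → M₁↑(d+1)`, moving `α(σ)` from `A` to `B`. -/
noncomputable def fMap (σ : Cube) : Cube :=
  ⟨σ.A.erase σ.alpha, insert σ.alpha σ.B, σ.C, σ.D⟩

/-- The claimed inverse of `f`, moving `α(σ)` from `B` to `A`. -/
noncomputable def fInv (σ : Cube) : Cube :=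
  ⟨insert σ.alpha σ.A, σ.B.erase σ.alpha, σ.C, σ.D⟩

/-- The map `g : M₂↓(d) → M₂↑(d+1)`, moving `β(σ)` from `C` to `B`. -/
noncomputable def gMap (σ : Cube) : Cube :=
  ⟨σ.A, insert σ.beta σ.B, σ.C.erase σ.beta, σ.D⟩

/-- The claimed inverse of `g`, moving `β(σ)` from `B` to `C`. -/
noncomputable def gInv (σ : Cube) : Cube :=
  ⟨σ.A, σ.B.erase σ.beta, insert σ.beta σ.C, σ.D⟩


section Helpers

lemma alpha_mem (σ : Cube) (h : (σ.A ∪ σ.B).Nonempty) : σ.alpha ∈ σ.A ∪ σ.B := by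
  have := Nat.sInf_mem (s := (↑(σ.A ∪ σ.B) : Set ℕ)) (by exact_mod_cast h)
  exact_mod_cast this

lemma alpha_le (σ : Cube) {x : ℕ} (hx : x ∈ σ.A ∪ σ.B) : σ.alpha ≤ x :=
  Nat.sInf_le (Finset.mem_coe.mpr hx)

lemma beta_mem (σ : Cube) (h : (σ.B ∪ σ.C).Nonempty) : σ.beta ∈ σ.B ∪ σ.C := by
  have := Set.Nonempty.csSup_mem (s := (↑(σ.B ∪ σ.C) : Set ℕ))
    (by exact_mod_cast h) (Finset.finite_toSet _)
  exact_mod_cast this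

lemma beta_le (σ : Cube) {x : ℕ} (hx : x ∈ σ.B ∪ σ.C) : x ≤ σ.beta :=
  le_csSup (Finset.finite_toSet _).bddAbove (Finset.mem_coe.mpr hx)

lemma alpha_eq_of {σ : Cube} {a : ℕ} (ha : a ∈ σ.A ∪ σ.B)
    (h : ∀ b ∈ σ.A ∪ σ.B, a ≤ b) : σ.alpha = a :=
  le_antisymm (alpha_le σ ha) (h _ (alpha_mem σ ⟨a, ha⟩))

lemma beta_eq_of {σ : Cube} {a : ℕ} (ha : a ∈ σ.B ∪ σ.C)
    (h : ∀ b ∈ σ.B ∪ σ.C, b ≤ a) : σ.beta = a :=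
  le_antisymm (h _ (beta_mem σ ⟨a, ha⟩)) (beta_le σ ha)

lemma f_forward {n : ℕ} {σ : Cube} (hσ : IsCube n σ) (hm : M1down σ) :
    IsCube n (fMap σ) ∧ M1up (fMap σ) ∧ (fMap σ).dim = σ.dim + 1 ∧ fInv (fMap σ) = σ := by
  obtain ⟨hAB, hAC, hAD, hBC, hBD, hCD, hU, hA, hC⟩ := hσ
  obtain ⟨hαA, hA2⟩ := hm
  have hαB : σ.alpha ∉ σ.B := Finset.disjoint_left.mp hAB hαA
  have hαC : σ.alpha ∉ σ.C := Finset.disjoint_left.mp hAC hαA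
  have hαD : σ.alpha ∉ σ.D := Finset.disjoint_left.mp hAD hαA
  have hUnion : σ.A.erase σ.alpha ∪ insert σ.alpha σ.B = σ.A ∪ σ.B := by
    ext x
    by_cases hx : x = σ.alpha <;>
      simp [Finset.mem_union, Finset.mem_erase, Finset.mem_insert, hx, hαA] <;> tauto
  have halpha : (fMap σ).alpha = σ.alpha := by
    show sInf _ = sInf _
    simp only [fMap]
    rw [hUnion]
  refine ⟨⟨?_, ?_, ?_, ?_, ?_, ?_, ?_, ?_, ?_⟩, ?_, ?_, ?_⟩
  · show Disjoint (σ.A.erase σ.alpha) (insert σ.alpha σ.B)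
    rw [Finset.disjoint_insert_right]
    exact ⟨Finset.notMem_erase _ _, Finset.disjoint_of_subset_left (Finset.erase_subset _ _) hAB⟩
  · exact Finset.disjoint_of_subset_left (Finset.erase_subset _ _) hAC
  · exact Finset.disjoint_of_subset_left (Finset.erase_subset _ _) hAD
  · show Disjoint (insert σ.alpha σ.B) σ.C
    rw [Finset.disjoint_insert_left]; exact ⟨hαC, hBC⟩
  · show Disjoint (insert σ.alpha σ.B) σ.D
    rw [Finset.disjoint_insert_left]; exact ⟨hαD, hBD⟩
  · exact hCD
  · show σ.A.erase σ.alpha ∪ insert σ.alpha σ.B ∪ σ.C ∪ σ.D = _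
    rw [hUnion]; exact hU
  · show (σ.A.erase σ.alpha).Nonempty
    rw [← Finset.card_pos, Finset.card_erase_of_mem hαA]; omega
  · exact hC
  · show (fMap σ).alpha ∈ insert σ.alpha σ.B
    rw [halpha]; exact Finset.mem_insert_self _ _
  · show (insert σ.alpha σ.B).card + σ.D.card = σ.B.card + σ.D.card + 1
    rw [Finset.card_insert_of_notMem hαB]; omega
  · show Cube.mk _ _ _ _ = σ
    rw [halpha]
    simp only [fMap]
    rw [Finset.insert_erase hαA, Finset.erase_insert hαB]

lemma f_backward {n : ℕ} {σ : Cube} (hσ : IsCube n σ) (hm : M1up σ) :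
    IsCube n (fInv σ) ∧ M1down (fInv σ) ∧ σ.dim = (fInv σ).dim + 1 ∧ fMap (fInv σ) = σ := by
  obtain ⟨hAB, hAC, hAD, hBC, hBD, hCD, hU, hA, hC⟩ := hσ
  have hαB : σ.alpha ∈ σ.B := hm
  have hαA : σ.alpha ∉ σ.A := fun h => Finset.disjoint_left.mp hAB h hαB
  have hαC : σ.alpha ∉ σ.C := Finset.disjoint_left.mp hBC hαB
  have hαD : σ.alpha ∉ σ.D := Finset.disjoint_left.mp hBD hαB
  have hUnion : insert σ.alpha σ.A ∪ σ.B.erase σ.alpha = σ.A ∪ σ.B := by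
    ext x
    by_cases hx : x = σ.alpha <;>
      simp [Finset.mem_union, Finset.mem_erase, Finset.mem_insert, hx, hαB] <;> tauto
  have halpha : (fInv σ).alpha = σ.alpha := by
    show sInf _ = sInf _
    simp only [fInv]
    rw [hUnion]
  refine ⟨⟨?_, ?_, ?_, ?_, ?_, ?_, ?_, ?_, ?_⟩, ⟨?_, ?_⟩, ?_, ?_⟩
  · show Disjoint (insert σ.alpha σ.A) (σ.B.erase σ.alpha)
    rw [Finset.disjoint_insert_left]
    exact ⟨Finset.notMem_erase _ _, Finset.disjoint_of_subset_right (Finset.erase_subset _ _) hAB⟩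
  · show Disjoint (insert σ.alpha σ.A) σ.C
    rw [Finset.disjoint_insert_left]; exact ⟨hαC, hAC⟩
  · show Disjoint (insert σ.alpha σ.A) σ.D
    rw [Finset.disjoint_insert_left]; exact ⟨hαD, hAD⟩
  · exact Finset.disjoint_of_subset_left (Finset.erase_subset _ _) hBC
  · exact Finset.disjoint_of_subset_left (Finset.erase_subset _ _) hBD
  · exact hCD
  · show insert σ.alpha σ.A ∪ σ.B.erase σ.alpha ∪ σ.C ∪ σ.D = _
    rw [hUnion]; exact hU
  · exact ⟨σ.alpha, Finset.mem_insert_self _ _⟩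
  · exact hC
  · show (fInv σ).alpha ∈ insert σ.alpha σ.A
    rw [halpha]; exact Finset.mem_insert_self _ _
  · show 2 ≤ (insert σ.alpha σ.A).card
    rw [Finset.card_insert_of_notMem hαA]
    have := Finset.card_pos.mpr hA
    omega
  · show σ.B.card + σ.D.card = (σ.B.erase σ.alpha).card + σ.D.card + 1
    rw [Finset.card_erase_of_mem hαB]
    have := Finset.card_pos.mpr ⟨σ.alpha, hαB⟩
    omega
  · show Cube.mk _ _ _ _ = σ
    rw [halpha]
    simp only [fInv]
    rw [Finset.erase_insert hαA, Finset.insert_erase hαB]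

lemma g_forward {n : ℕ} {σ : Cube} (hσ : IsCube n σ) (hm : M2down σ) :
    IsCube n (gMap σ) ∧ M2up (gMap σ) ∧ (gMap σ).dim = σ.dim + 1 ∧ gInv (gMap σ) = σ := by
  obtain ⟨hAB, hAC, hAD, hBC, hBD, hCD, hU, hA, hC⟩ := hσ
  obtain ⟨hAα, hβC, hC2, hαβ⟩ := hm
  have hβA : σ.beta ∉ σ.A := fun h => Finset.disjoint_left.mp hAC h hβC
  have hβB : σ.beta ∉ σ.B := fun h => Finset.disjoint_left.mp hBC h hβC
  have hβD : σ.beta ∉ σ.D := Finset.disjoint_left.mp hCD hβC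
  have hαA : σ.alpha ∈ σ.A := by rw [hAα]; exact Finset.mem_singleton_self _
  have hUnion : insert σ.beta σ.B ∪ σ.C.erase σ.beta = σ.B ∪ σ.C := by
    ext x
    by_cases hx : x = σ.beta <;>
      simp [Finset.mem_union, Finset.mem_erase, Finset.mem_insert, hx, hβC] <;> tauto
  have hbeta : (gMap σ).beta = σ.beta := by
    show sInf _ = sInf _
    simp only [gMap]
    rw [hUnion]
  have halpha : (gMap σ).alpha = σ.alpha := by
    apply alpha_eq_of
    · show σ.alpha ∈ σ.A ∪ insert σ.beta σ.B
      exact Finset.mem_union_left _ hαA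
    · intro b hb
      rcases Finset.mem_union.mp hb with h | h
      · exact alpha_le σ (Finset.mem_union_left _ h)
      · rcases Finset.mem_insert.mp h with rfl | h
        · exact le_of_lt hαβ
        · exact alpha_le σ (Finset.mem_union_right _ h)
  refine ⟨⟨?_, ?_, ?_, ?_, ?_, ?_, ?_, ?_, ?_⟩, ⟨?_, ?_⟩, ?_, ?_⟩
  · show Disjoint σ.A (insert σ.beta σ.B)
    rw [Finset.disjoint_insert_right]; exact ⟨hβA, hAB⟩
  · exact Finset.disjoint_of_subset_right (Finset.erase_subset _ _) hAC
  · exact hAD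
  · show Disjoint (insert σ.beta σ.B) (σ.C.erase σ.beta)
    rw [Finset.disjoint_insert_left]
    exact ⟨Finset.notMem_erase _ _, Finset.disjoint_of_subset_right (Finset.erase_subset _ _) hBC⟩
  · show Disjoint (insert σ.beta σ.B) σ.D
    rw [Finset.disjoint_insert_left]; exact ⟨hβD, hBD⟩
  · exact Finset.disjoint_of_subset_left (Finset.erase_subset _ _) hCD
  · show σ.A ∪ insert σ.beta σ.B ∪ (σ.C.erase σ.beta) ∪ σ.D = _
    rw [Finset.union_assoc σ.A, hUnion, ← Finset.union_assoc]; exact hU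
  · exact hA
  · show (σ.C.erase σ.beta).Nonempty
    rw [← Finset.card_pos, Finset.card_erase_of_mem hβC]; omega
  · show σ.A = {(gMap σ).alpha}
    rw [halpha]; exact hAα
  · show (gMap σ).beta ∈ insert σ.beta σ.B
    rw [hbeta]; exact Finset.mem_insert_self _ _
  · show (insert σ.beta σ.B).card + σ.D.card = σ.B.card + σ.D.card + 1
    rw [Finset.card_insert_of_notMem hβB]; omega
  · show Cube.mk _ _ _ _ = σ
    rw [hbeta]
    simp only [gMap]
    rw [Finset.insert_erase hβC, Finset.erase_insert hβB]

lemma g_backward {n : ℕ} {σ : Cube} (hσ : IsCube n σ) (hm : M2up σ) :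
    IsCube n (gInv σ) ∧ M2down (gInv σ) ∧ σ.dim = (gInv σ).dim + 1 ∧ gMap (gInv σ) = σ := by
  obtain ⟨hAB, hAC, hAD, hBC, hBD, hCD, hU, hA, hC⟩ := hσ
  obtain ⟨hAα, hβB⟩ := hm
  have hβA : σ.beta ∉ σ.A := fun h => Finset.disjoint_left.mp hAB h hβB
  have hβC : σ.beta ∉ σ.C := Finset.disjoint_left.mp hBC hβB
  have hβD : σ.beta ∉ σ.D := Finset.disjoint_left.mp hBD hβB
  have hαA : σ.alpha ∈ σ.A := by rw [hAα]; exact Finset.mem_singleton_self _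
  have hαβ : σ.alpha < σ.beta := by
    have hle : σ.alpha ≤ σ.beta := alpha_le σ (Finset.mem_union_right _ hβB)
    have hne : σ.alpha ≠ σ.beta := fun h => hβA (h ▸ hαA)
    omega
  have hUnion : σ.B.erase σ.beta ∪ insert σ.beta σ.C = σ.B ∪ σ.C := by
    ext x
    by_cases hx : x = σ.beta <;>
      simp [Finset.mem_union, Finset.mem_erase, Finset.mem_insert, hx, hβB] <;> tauto
  have hbeta : (gInv σ).beta = σ.beta := by
    show sInf _ = sInf _
    simp only [gInv]
    rw [hUnion]
  have halpha : (gInv σ).alpha = σ.alpha := by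
    apply alpha_eq_of
    · show σ.alpha ∈ σ.A ∪ σ.B.erase σ.beta
      exact Finset.mem_union_left _ hαA
    · intro b hb
      rcases Finset.mem_union.mp hb with h | h
      · exact alpha_le σ (Finset.mem_union_left _ h)
      · exact alpha_le σ (Finset.mem_union_right _ (Finset.mem_of_mem_erase h))
  refine ⟨⟨?_, ?_, ?_, ?_, ?_, ?_, ?_, ?_, ?_⟩, ⟨?_, ?_, ?_, ?_⟩, ?_, ?_⟩
  · exact Finset.disjoint_of_subset_right (Finset.erase_subset _ _) hAB
  · show Disjoint σ.A (insert σ.beta σ.C)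
    rw [Finset.disjoint_insert_right]; exact ⟨hβA, hAC⟩
  · exact hAD
  · show Disjoint (σ.B.erase σ.beta) (insert σ.beta σ.C)
    rw [Finset.disjoint_insert_right]
    exact ⟨Finset.notMem_erase _ _, Finset.disjoint_of_subset_left (Finset.erase_subset _ _) hBC⟩
  · exact Finset.disjoint_of_subset_left (Finset.erase_subset _ _) hBD
  · show Disjoint (insert σ.beta σ.C) σ.D
    rw [Finset.disjoint_insert_left]; exact ⟨hβD, hCD⟩
  · show σ.A ∪ σ.B.erase σ.beta ∪ insert σ.beta σ.C ∪ σ.D = _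
    rw [Finset.union_assoc σ.A, hUnion, ← Finset.union_assoc]; exact hU
  · exact hA
  · exact ⟨σ.beta, Finset.mem_insert_self _ _⟩
  · show σ.A = {(gInv σ).alpha}
    rw [halpha]; exact hAα
  · show (gInv σ).beta ∈ insert σ.beta σ.C
    rw [hbeta]; exact Finset.mem_insert_self _ _
  · show 2 ≤ (insert σ.beta σ.C).card
    rw [Finset.card_insert_of_notMem hβC]
    have := Finset.card_pos.mpr hC
    omega
  · show (gInv σ).alpha < (gInv σ).beta
    rw [halpha, hbeta]; exact hαβ
  · show σ.B.card + σ.D.card = (σ.B.erase σ.beta).card + σ.D.card + 1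
    rw [Finset.card_erase_of_mem hβB]
    have := Finset.card_pos.mpr ⟨σ.beta, hβB⟩
    omega
  · show Cube.mk _ _ _ _ = σ
    rw [hbeta]
    simp only [gInv]
    rw [Finset.insert_erase hβB, Finset.erase_insert hβC]

end Helpers

/-- For `0 ≤ d ≤ n−3`, `f : M₁↓(d) → M₁↑(d+1)` and `g : M₂↓(d) → M₂↑(d+1)` are
well-defined bijections, with the indicated inverses. -/
theorem f_g_bijections (n d : ℕ) (hn : 2 ≤ n) (hd : d + 3 ≤ n) :
    Set.BijOn fMap {σ : Cube | IsCube n σ ∧ M1down σ ∧ σ.dim = d}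
      {σ : Cube | IsCube n σ ∧ M1up σ ∧ σ.dim = d + 1} ∧
    (∀ σ : Cube, IsCube n σ → M1down σ → σ.dim = d → fInv (fMap σ) = σ) ∧
    (∀ σ : Cube, IsCube n σ → M1up σ → σ.dim = d + 1 → fMap (fInv σ) = σ) ∧
    Set.BijOn gMap {σ : Cube | IsCube n σ ∧ M2down σ ∧ σ.dim = d}
      {σ : Cube | IsCube n σ ∧ M2up σ ∧ σ.dim = d + 1} ∧
    (∀ σ : Cube, IsCube n σ → M2down σ → σ.dim = d → gInv (gMap σ) = σ) ∧
    (∀ σ : Cube, IsCube n σ → M2up σ → σ.dim = d + 1 → gMap (gInv σ) = σ) := by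
  constructor
  · refine Set.InvOn.bijOn (f := fMap) (f' := fInv) ⟨?_, ?_⟩ ?_ ?_
    · intro σ ⟨h1, h2, _⟩; exact (f_forward h1 h2).2.2.2
    · intro σ ⟨h1, h2, _⟩; exact (f_backward h1 h2).2.2.2
    · rintro σ ⟨h1, h2, h3⟩
      exact ⟨(f_forward h1 h2).1, (f_forward h1 h2).2.1, by
        rw [(f_forward h1 h2).2.2.1, h3]⟩
    · rintro σ ⟨h1, h2, h3⟩
      refine ⟨(f_backward h1 h2).1, (f_backward h1 h2).2.1, ?_⟩
      have := (f_backward h1 h2).2.2.1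
      omega
  refine ⟨fun σ h1 h2 _ => (f_forward h1 h2).2.2.2,
    fun σ h1 h2 _ => (f_backward h1 h2).2.2.2, ?_,
    fun σ h1 h2 _ => (g_forward h1 h2).2.2.2,
    fun σ h1 h2 _ => (g_backward h1 h2).2.2.2⟩
  refine Set.InvOn.bijOn (f := gMap) (f' := gInv) ⟨?_, ?_⟩ ?_ ?_
  · intro σ ⟨h1, h2, _⟩; exact (g_forward h1 h2).2.2.2
  · intro σ ⟨h1, h2, _⟩; exact (g_backward h1 h2).2.2.2
  · rintro σ ⟨h1, h2, h3⟩
    exact ⟨(g_forward h1 h2).1, (g_forward h1 h2).2.1, by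
      rw [(g_forward h1 h2).2.2.1, h3]⟩
  · rintro σ ⟨h1, h2, h3⟩
    refine ⟨(g_backward h1 h2).1, (g_backward h1 h2).2.1, ?_⟩
    have := (g_backward h1 h2).2.2.1
    omega
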